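/- arXiv:2207.12109 — 2 statements merged into one kernel-verified Lean document; each statement's English description precedes it below -/
import Mathlib

section
/- Let m ≥ 1 and n ≥ m be integers and μ > 0 a real. Define φ : [0,∞) → ℝ by φ(0) = 0 and φ(t) = t·B_{m,n}(t/μ) for t > 0. Then φ is strictly increasing and strictly convex on [0,∞). -/
/-- `a_j(r)` coefficients of the M/M/m/n queue. -/
noncomputable def aCoef (m j : ℕ) (r : ℝ) : ℝ :=
  if j ≤ m then r ^ j / (Nat.factorial j : ℝ)
  else (r ^ m / (Nat.factorial m : ℝ)) * (r / (m : ℝ)) ^ (j - m)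

/-- Blocking probability `B_{m,n}(r)` of the M/M/m/n queue with offered load `r`. -/
noncomputable def Bmn (m n : ℕ) (r : ℝ) : ℝ :=
  aCoef m n r / ∑ j ∈ Finset.range (n + 1), aCoef m j r

/-- Mean number in system `L_{m,n}(r)` of the M/M/m/n queue with offered load `r`. -/
noncomputable def Lmn (m n : ℕ) (r : ℝ) : ℝ :=
  (∑ j ∈ Finset.range (n + 1), (j : ℝ) * aCoef m j r) /
    ∑ j ∈ Finset.range (n + 1), aCoef m j r

/-- Erlang-B formula `B_m(r)`. -/
noncomputable def erlangB (m : ℕ) (r : ℝ) : ℝ :=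
  (r ^ m / (Nat.factorial m : ℝ)) / ∑ j ∈ Finset.range (m + 1), r ^ j / (Nat.factorial j : ℝ)

/-!
Write `r = t / μ`. Since `a_j(r) · r = min(j+1, m) · a_{j+1}(r)`, for `t > 0` we have
`1 / φ(t) = h(t) := ∑_{k ≤ n} e_k t^{-(k+1)}` with `e_k = μ^k ∏_{i<k} min(n-i, m)`, whose ratios
`e_{k+1} / e_k = μ · min(n-k, m)` decrease. So `φ = 1/h` increases because `h` decreases, and
`(1/h)'' = (2h'² - h h'') / h³`. With `q_k = e_k t^{-(k+1)}` one has `t h' = -∑ (k+1) q_k` and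
`t² h'' = ∑ (k+1)(k+2) q_k`, so convexity reduces to
`(∑ q_k) (∑ (k+1)(k+2) q_k) < 2 (∑ (k+1) q_k)²`. For the tail sums `T_i = q_i + ⋯ + q_n` this reads
`T_0 ∑ (i+1) T_i < (∑ T_i)²`. The tails inherit decreasing ratios from `q`, hence
`T_0 T_{a+b} ≤ T_a T_b`; summing over `a + b ≤ n` gives the inequality, strictly because the pair
`(n, n)` is left out.
-/

open Finset Set

section AntitoneRatio

variable {q ρ : ℕ → ℝ}

theorem mul_le_mul_add_of_antitone_ratio (hq : ∀ k, q (k + 1) = ρ k * q k) (hρ : Antitone ρ)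
    (hρ0 : 0 ≤ ρ) (hq0 : 0 ≤ q) {i j : ℕ} (hij : i ≤ j) (d : ℕ) :
    q i * q (j + d) ≤ q (i + d) * q j := by
  induction d with
  | zero => rw [add_zero, add_zero, mul_comm]
  | succ d ih =>
    rw [← add_assoc, ← add_assoc, hq, hq]
    calc q i * (ρ (j + d) * q (j + d)) = ρ (j + d) * (q i * q (j + d)) := by ring
      _ ≤ ρ (i + d) * (q (i + d) * q j) :=
        mul_le_mul (hρ (by omega)) ih (mul_nonneg (hq0 _) (hq0 _)) (hρ0 _)
      _ = ρ (i + d) * q (i + d) * q j := by ring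

theorem mul_add_le_mul_of_cross_ratio {x : ℕ → ℝ}
    (hx : ∀ i j, i ≤ j → x i * x (j + 1) ≤ x (i + 1) * x j) (a b : ℕ) :
    x 0 * x (a + b) ≤ x a * x b := by
  have key : ∀ a b, a ≤ b → x 0 * x (a + b) ≤ x a * x b := by
    intro a
    induction a with
    | zero => simp
    | succ a ih =>
      intro b hab
      calc x 0 * x (a + 1 + b) = x 0 * x (a + (b + 1)) := by rw [add_right_comm, add_assoc]
        _ ≤ x a * x (b + 1) := ih (b + 1) (by omega)
        _ ≤ x (a + 1) * x b := hx a b (by omega)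
  rcases le_total a b with hab | hba
  · exact key a b hab
  · rw [add_comm, mul_comm (x a)]
    exact key b a hba

noncomputable def tailSum (q : ℕ → ℝ) (n i : ℕ) : ℝ := ∑ k ∈ Ico i (n + 1), q k

theorem tailSum_nonneg (hq0 : 0 ≤ q) (n i : ℕ) : 0 ≤ tailSum q n i :=
  sum_nonneg fun k _ => hq0 k

theorem tailSum_eq_add {n i : ℕ} (hi : i ≤ n) : tailSum q n i = q i + tailSum q n (i + 1) :=
  sum_eq_sum_Ico_succ_bot (by omega) q

theorem tailSum_cross_ratio (hq : ∀ k, q (k + 1) = ρ k * q k) (hρ : Antitone ρ)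
    (hρ0 : 0 ≤ ρ) (hq0 : 0 ≤ q) (n : ℕ) {i j : ℕ} (hij : i ≤ j) :
    tailSum q n i * tailSum q n (j + 1) ≤ tailSum q n (i + 1) * tailSum q n j := by
  rcases lt_or_ge n j with hnj | hjn
  · have : tailSum q n (j + 1) = 0 := by
      rw [tailSum, Finset.Ico_eq_empty (by omega), sum_empty]
    rw [this, mul_zero]
    exact mul_nonneg (tailSum_nonneg hq0 n _) (tailSum_nonneg hq0 n _)
  suffices q i * tailSum q n (j + 1) ≤ q j * tailSum q n (i + 1) by
    rw [tailSum_eq_add (hij.trans hjn), tailSum_eq_add hjn]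
    linarith
  calc q i * tailSum q n (j + 1) = ∑ d ∈ range (n - j), q i * q (j + 1 + d) := by
        rw [tailSum, sum_Ico_eq_sum_range, mul_sum, Nat.add_sub_add_right]
    _ ≤ ∑ d ∈ range (n - j), q j * q (i + 1 + d) := sum_le_sum fun d _ => by
        have h := mul_le_mul_add_of_antitone_ratio hq hρ hρ0 hq0 hij (1 + d)
        rw [← add_assoc, ← add_assoc] at h
        linarith
    _ ≤ ∑ d ∈ range (n - i), q j * q (i + 1 + d) :=
        sum_le_sum_of_subset_of_nonneg (range_subset_range.2 (by omega))
          fun d _ _ => mul_nonneg (hq0 _) (hq0 _)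
    _ = q j * tailSum q n (i + 1) := by
        rw [tailSum, sum_Ico_eq_sum_range, mul_sum, Nat.add_sub_add_right]

theorem sum_range_sum_Ico_comm (n : ℕ) (f : ℕ → ℕ → ℝ) :
    ∑ i ∈ range (n + 1), ∑ k ∈ Ico i (n + 1), f i k =
      ∑ k ∈ range (n + 1), ∑ i ∈ range (k + 1), f i k := by
  simpa only [range_eq_Ico] using sum_Ico_Ico_comm 0 (n + 1) f

theorem two_mul_sum_range_add_one (k : ℕ) :
    2 * ∑ i ∈ range k, ((i : ℝ) + 1) = k * (k + 1) := by
  induction k with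
  | zero => simp
  | succ k ih => rw [sum_range_succ, mul_add, ih]; push_cast; ring

theorem sum_tailSum (q : ℕ → ℝ) (n : ℕ) :
    ∑ i ∈ range (n + 1), tailSum q n i = ∑ k ∈ range (n + 1), ((k : ℝ) + 1) * q k := by
  simp only [tailSum]
  rw [sum_range_sum_Ico_comm n fun _ k => q k]
  simp

theorem two_mul_sum_mul_tailSum (q : ℕ → ℝ) (n : ℕ) :
    2 * ∑ i ∈ range (n + 1), ((i : ℝ) + 1) * tailSum q n i =
      ∑ k ∈ range (n + 1), ((k : ℝ) + 1) * ((k : ℝ) + 2) * q k := by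
  simp only [tailSum, mul_sum (Ico _ _)]
  rw [sum_range_sum_Ico_comm n fun i k => ((i : ℝ) + 1) * q k, mul_sum]
  refine sum_congr rfl fun k _ => ?_
  rw [← sum_mul, ← mul_assoc, two_mul_sum_range_add_one]
  push_cast; ring

theorem tailSum_zero_mul_lt_sq (hq : ∀ k, q (k + 1) = ρ k * q k) (hρ : Antitone ρ)
    (hρ0 : 0 ≤ ρ) (hq0 : 0 ≤ q) {n : ℕ} (hn : 1 ≤ n) (hqn : 0 < q n) :
    tailSum q n 0 * ∑ i ∈ range (n + 1), ((i : ℝ) + 1) * tailSum q n i <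
      (∑ i ∈ range (n + 1), tailSum q n i) ^ 2 := by
  set T := tailSum q n
  have hT0 : 0 ≤ T := tailSum_nonneg hq0 n
  have hTn : 0 < T n := by simpa [T, tailSum] using hqn
  calc T 0 * ∑ i ∈ range (n + 1), ((i : ℝ) + 1) * T i
      = ∑ a ∈ range (n + 1), ∑ c ∈ Ico a (n + 1), T 0 * T c := by
        rw [sum_range_sum_Ico_comm n fun _ c => T 0 * T c, mul_sum]
        simp [mul_left_comm]
    _ = ∑ a ∈ range (n + 1), ∑ b ∈ range (n + 1 - a), T 0 * T (a + b) := by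
        simp only [sum_Ico_eq_sum_range]
    _ ≤ ∑ a ∈ range (n + 1), ∑ b ∈ range (n + 1 - a), T a * T b :=
        sum_le_sum fun a _ => sum_le_sum fun b _ =>
          mul_add_le_mul_of_cross_ratio (fun i j => tailSum_cross_ratio hq hρ hρ0 hq0 n) a b
    _ < ∑ a ∈ range (n + 1), ∑ b ∈ range (n + 1), T a * T b := by
        refine sum_lt_sum (fun a _ => sum_le_sum_of_subset_of_nonneg
          (range_subset_range.2 (by omega)) fun b _ _ => mul_nonneg (hT0 a) (hT0 b))
          ⟨n, self_mem_range_succ n, ?_⟩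
        exact sum_lt_sum_of_subset (range_subset_range.2 (by omega)) (self_mem_range_succ n)
          (by simp; omega) (mul_pos hTn hTn) fun b _ _ => mul_nonneg (hT0 n) (hT0 b)
    _ = (∑ i ∈ range (n + 1), T i) ^ 2 := by rw [sq, sum_mul_sum]

theorem sum_mul_sum_lt_two_mul_sq (hq : ∀ k, q (k + 1) = ρ k * q k) (hρ : Antitone ρ)
    (hρ0 : 0 ≤ ρ) (hq0 : 0 ≤ q) {n : ℕ} (hn : 1 ≤ n) (hqn : 0 < q n) :
    (∑ k ∈ range (n + 1), q k) * ∑ k ∈ range (n + 1), ((k : ℝ) + 1) * ((k : ℝ) + 2) * q k <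
      2 * (∑ k ∈ range (n + 1), ((k : ℝ) + 1) * q k) ^ 2 := by
  have h := tailSum_zero_mul_lt_sq hq hρ hρ0 hq0 hn hqn
  have h0 : ∑ k ∈ range (n + 1), q k = tailSum q n 0 := by rw [tailSum, range_eq_Ico]
  rw [← sum_tailSum q n, ← two_mul_sum_mul_tailSum q n, h0]
  linarith

end AntitoneRatio

theorem strictConvexOn_of_hasDerivAt2_pos {D : Set ℝ} (hD : Convex ℝ D) {f f' f'' : ℝ → ℝ}
    (hf : ContinuousOn f D) (hf' : ∀ x ∈ interior D, HasDerivAt f (f' x) x)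
    (hf'' : ∀ x ∈ interior D, HasDerivAt f' (f'' x) x) (hf''₀ : ∀ x ∈ interior D, 0 < f'' x) :
    StrictConvexOn ℝ D f := by
  have hmono : StrictMonoOn f' (interior D) :=
    strictMonoOn_of_hasDerivWithinAt_pos hD.interior
      (fun x hx => (hf'' x hx).continuousAt.continuousWithinAt)
      (by rw [interior_interior]; exact fun x hx => (hf'' x hx).hasDerivWithinAt)
      (by rwa [interior_interior])
  exact (hmono.congr fun x hx => (hf' x hx).deriv.symm).strictConvexOn_of_deriv hD hf

section Reciprocal

variable {D : Set ℝ} {h h' h'' : ℝ → ℝ}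

theorem strictMonoOn_inv_of_hasDerivAt_neg (hD : Convex ℝ D)
    (hc : ContinuousOn (fun x => (h x)⁻¹) D) (hh : ∀ x ∈ interior D, HasDerivAt h (h' x) x)
    (hpos : ∀ x ∈ interior D, 0 < h x) (hneg : ∀ x ∈ interior D, h' x < 0) :
    StrictMonoOn (fun x => (h x)⁻¹) D :=
  strictMonoOn_of_hasDerivWithinAt_pos hD hc
    (fun x hx => ((hh x hx).inv (hpos x hx).ne').hasDerivWithinAt)
    fun x hx => div_pos (neg_pos.2 (hneg x hx)) (pow_pos (hpos x hx) 2)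

theorem strictConvexOn_inv_of_hasDerivAt2 (hD : Convex ℝ D)
    (hc : ContinuousOn (fun x => (h x)⁻¹) D) (hh : ∀ x ∈ interior D, HasDerivAt h (h' x) x)
    (hh' : ∀ x ∈ interior D, HasDerivAt h' (h'' x) x) (hpos : ∀ x ∈ interior D, 0 < h x)
    (hlt : ∀ x ∈ interior D, h x * h'' x < 2 * h' x ^ 2) :
    StrictConvexOn ℝ D (fun x => (h x)⁻¹) := by
  refine strictConvexOn_of_hasDerivAt2_pos hD hc (fun x hx => (hh x hx).inv (hpos x hx).ne')
    (fun x hx => ((hh' x hx).neg.div ((hh x hx).pow 2) (pow_pos (hpos x hx) 2).ne')) ?_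
  intro x hx
  have hhx := hpos x hx
  refine div_pos ?_ (by positivity)
  convert mul_pos hhx (sub_pos.2 (hlt x hx)) using 1
  simp only [Pi.neg_apply]
  ring

end Reciprocal

noncomputable def invPowSum (e : ℕ → ℝ) (n : ℕ) (t : ℝ) : ℝ :=
  ∑ k ∈ range (n + 1), e k * t ^ (-(k : ℤ) - 1)

section InvPowSum

variable {e σ : ℕ → ℝ} {n : ℕ} {t : ℝ}

-- `0 ^ (-(k+1)) = 0` in Lean, so `(invPowSum e n ·)⁻¹` vanishes at `0`, as `φ` does.
theorem invPowSum_zero_right (e : ℕ → ℝ) (n : ℕ) : invPowSum e n 0 = 0 :=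
  sum_eq_zero fun k _ => by rw [zero_zpow _ (by omega), mul_zero]

theorem invPowSum_add (e e' : ℕ → ℝ) (n : ℕ) (t : ℝ) :
    invPowSum (e + e') n t = invPowSum e n t + invPowSum e' n t := by
  simp only [invPowSum, Pi.add_apply, add_mul, sum_add_distrib]

theorem hasDerivAt_invPowSum (e : ℕ → ℝ) (n : ℕ) (ht : t ≠ 0) :
    HasDerivAt (invPowSum e n) (-invPowSum (fun k => ((k : ℝ) + 1) * e k) n t / t) t := by
  have hsum := HasDerivAt.fun_sum (u := range (n + 1)) fun k _ =>
    (hasDerivAt_zpow (-(k : ℤ) - 1) t (Or.inl ht)).const_mul (e k)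
  refine (hsum : HasDerivAt (invPowSum e n) _ t).congr_deriv ?_
  simp only [invPowSum, neg_div, sum_div, ← sum_neg_distrib, zpow_sub_one₀ ht]
  refine sum_congr rfl fun k _ => ?_
  push_cast
  field_simp
  ring

theorem invPowSum_pos (he0 : 0 ≤ e) (h0 : 0 < e 0) (ht : 0 < t) : 0 < invPowSum e n t :=
  sum_pos' (fun k _ => mul_nonneg (he0 k) (zpow_pos ht _).le)
    ⟨0, mem_range.2 n.succ_pos, mul_pos h0 (zpow_pos ht _)⟩

theorem hasDerivAt_neg_invPowSum_div (e : ℕ → ℝ) (n : ℕ) (ht : t ≠ 0) :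
    HasDerivAt (fun s => -invPowSum (fun k => ((k : ℝ) + 1) * e k) n s / s)
      (invPowSum (fun k => ((k : ℝ) + 1) * ((k : ℝ) + 2) * e k) n t / t ^ 2) t := by
  refine ((hasDerivAt_invPowSum _ n ht).neg.div (hasDerivAt_id t) ht).congr_deriv ?_
  have hsplit : (fun k : ℕ => ((k : ℝ) + 1) * ((k : ℝ) + 2) * e k) =
      (fun k : ℕ => ((k : ℝ) + 1) * (((k : ℝ) + 1) * e k)) + fun k : ℕ => ((k : ℝ) + 1) * e k := by
    ext k; simp only [Pi.add_apply]; ring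
  rw [hsplit, invPowSum_add, id]
  field_simp
  simp only [Pi.neg_apply]
  ring

theorem invPowSum_nonneg (he0 : 0 ≤ e) (ht : 0 ≤ t) : 0 ≤ invPowSum e n t :=
  sum_nonneg fun k _ => mul_nonneg (he0 k) (zpow_nonneg ht _)

theorem inv_invPowSum_le (he0 : 0 ≤ e) (h0 : 0 < e 0) (ht : 0 ≤ t) :
    (invPowSum e n t)⁻¹ ≤ t / e 0 := by
  rcases ht.eq_or_lt with rfl | ht
  · simp [invPowSum_zero_right]
  have hle : e 0 * t⁻¹ ≤ invPowSum e n t := by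
    simpa [invPowSum] using single_le_sum (f := fun k => e k * t ^ (-(k : ℤ) - 1))
      (fun k _ => mul_nonneg (he0 k) (zpow_pos ht _).le) (mem_range.2 n.succ_pos)
  calc (invPowSum e n t)⁻¹ ≤ (e 0 * t⁻¹)⁻¹ := inv_anti₀ (by positivity) hle
    _ = t / e 0 := by rw [mul_inv, inv_inv, div_eq_mul_inv, mul_comm]

theorem continuousOn_inv_invPowSum (he0 : 0 ≤ e) (h0 : 0 < e 0) :
    ContinuousOn (fun t => (invPowSum e n t)⁻¹) (Ici 0) := by
  intro t ht
  rcases (mem_Ici.1 ht).eq_or_lt with rfl | ht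
  · rw [ContinuousWithinAt, invPowSum_zero_right, inv_zero]
    refine squeeze_zero' (g := fun s => s / e 0)
      (eventually_nhdsWithin_of_forall fun s hs => inv_nonneg.2 (invPowSum_nonneg he0 hs))
      (eventually_nhdsWithin_of_forall fun s hs => inv_invPowSum_le he0 h0 hs) ?_
    exact ((continuous_id.div_const _).tendsto' 0 0 (zero_div _)).mono_left nhdsWithin_le_nhds
  · exact ((hasDerivAt_invPowSum e n ht.ne').continuousAt.inv₀
      (invPowSum_pos he0 h0 ht).ne').continuousWithinAt

theorem invPowSum_mul_lt_two_mul_sq (he : ∀ k, e (k + 1) = σ k * e k) (hσ : Antitone σ)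
    (hσ0 : 0 ≤ σ) (he0 : 0 ≤ e) (hn : 1 ≤ n) (hen : 0 < e n) (ht : 0 < t) :
    invPowSum e n t * invPowSum (fun k => ((k : ℝ) + 1) * ((k : ℝ) + 2) * e k) n t <
      2 * invPowSum (fun k => ((k : ℝ) + 1) * e k) n t ^ 2 := by
  have key := sum_mul_sum_lt_two_mul_sq (q := fun k => e k * t ^ (-(k : ℤ) - 1))
    (ρ := fun k => σ k / t) (fun k => ?_) (fun i j hij => div_le_div_of_nonneg_right (hσ hij) ht.le)
    (fun k => div_nonneg (hσ0 k) ht.le) (fun k => mul_nonneg (he0 k) (zpow_pos ht _).le) hn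
    (mul_pos hen (zpow_pos ht _))
  · simpa only [invPowSum, mul_assoc] using key
  · rw [he, Nat.cast_succ, show -((k : ℤ) + 1) - 1 = -(k : ℤ) - 1 - 1 by ring,
      zpow_sub_one₀ ht.ne']
    ring

theorem strictMonoOn_inv_invPowSum (he0 : 0 ≤ e) (h0 : 0 < e 0) :
    StrictMonoOn (fun t => (invPowSum e n t)⁻¹) (Ici 0) := by
  refine strictMonoOn_inv_of_hasDerivAt_neg (convex_Ici 0) (continuousOn_inv_invPowSum he0 h0)
    (fun t ht => hasDerivAt_invPowSum e n (ne_of_gt (by simpa using ht)))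
    (fun t ht => invPowSum_pos he0 h0 (by simpa using ht)) fun t ht => ?_
  replace ht : 0 < t := by simpa using ht
  have hS1 := invPowSum_pos (e := fun k => ((k : ℝ) + 1) * e k) (n := n)
    (fun k => mul_nonneg (by positivity) (he0 k)) (by simpa using h0) ht
  exact div_neg_of_neg_of_pos (neg_neg_of_pos hS1) ht

theorem strictConvexOn_inv_invPowSum (he : ∀ k, e (k + 1) = σ k * e k) (hσ : Antitone σ)
    (hσ0 : 0 ≤ σ) (he0 : 0 ≤ e) (h0 : 0 < e 0) (hn : 1 ≤ n) (hen : 0 < e n) :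
    StrictConvexOn ℝ (Ici 0) (fun t => (invPowSum e n t)⁻¹) := by
  refine strictConvexOn_inv_of_hasDerivAt2 (convex_Ici 0) (continuousOn_inv_invPowSum he0 h0)
    (fun t ht => hasDerivAt_invPowSum e n (ne_of_gt (by simpa using ht)))
    (fun t ht => hasDerivAt_neg_invPowSum_div e n (ne_of_gt (by simpa using ht)))
    (fun t ht => invPowSum_pos he0 h0 (by simpa using ht)) fun t ht => ?_
  replace ht : 0 < t := by simpa using ht
  have key := invPowSum_mul_lt_two_mul_sq he hσ hσ0 he0 hn hen ht
  rw [neg_div, neg_sq, div_pow, mul_div_assoc', ← mul_div_assoc]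
  exact div_lt_div_of_pos_right key (by positivity)

end InvPowSum

-- `a_{n-k}(r) r^k = a_n(r) ∏_{i<k} min(n-i, m)`, so `1 / φ(t) = invPowSum (lossWeight m n μ) n t`.
noncomputable def lossWeight (m n : ℕ) (μ : ℝ) (k : ℕ) : ℝ :=
  μ ^ k * ∏ i ∈ range k, ((min (n - i) m : ℕ) : ℝ)

section Queue

variable {m n : ℕ} {μ r t : ℝ}

theorem aCoef_pos (hm : 1 ≤ m) (j : ℕ) (hr : 0 < r) : 0 < aCoef m j r := by
  have : (0 : ℝ) < m := by exact_mod_cast hm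
  unfold aCoef
  split <;> positivity

theorem aCoef_of_le {j : ℕ} (h : m ≤ j) (r : ℝ) :
    aCoef m j r = r ^ m / (Nat.factorial m : ℝ) * (r / m) ^ (j - m) := by
  unfold aCoef
  split_ifs with h'
  · obtain rfl : j = m := le_antisymm h' h
    simp
  · rfl

theorem aCoef_mul (hm : 1 ≤ m) (j : ℕ) (r : ℝ) :
    aCoef m j r * r = (min (j + 1) m : ℕ) * aCoef m (j + 1) r := by
  rcases le_or_gt (j + 1) m with hjm | hmj
  · rw [aCoef, aCoef, if_pos (by omega), if_pos hjm, min_eq_left hjm, Nat.factorial_succ]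
    push_cast
    field_simp
    ring
  · have hm0 : (m : ℝ) ≠ 0 := by positivity
    rw [aCoef_of_le (by omega), aCoef_of_le hmj.le, min_eq_right hmj.le,
      Nat.sub_add_comm (by omega), pow_succ]
    field_simp

theorem aCoef_sub_mul_pow (hm : 1 ≤ m) (r : ℝ) {k : ℕ} (hk : k ≤ n) :
    aCoef m (n - k) r * r ^ k = aCoef m n r * ∏ i ∈ range k, ((min (n - i) m : ℕ) : ℝ) := by
  induction k with
  | zero => simp
  | succ k ih =>
    have hstep := aCoef_mul hm (n - (k + 1)) r
    rw [show n - (k + 1) + 1 = n - k by omega] at hstep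
    calc aCoef m (n - (k + 1)) r * r ^ (k + 1)
        = (aCoef m (n - (k + 1)) r * r) * r ^ k := by ring
      _ = (min (n - k) m : ℕ) * (aCoef m (n - k) r * r ^ k) := by rw [hstep]; ring
      _ = _ := by rw [ih (by omega), prod_range_succ]; ring

theorem lossWeight_succ (m n : ℕ) (μ : ℝ) (k : ℕ) :
    lossWeight m n μ (k + 1) = μ * (min (n - k) m : ℕ) * lossWeight m n μ k := by
  rw [lossWeight, lossWeight, prod_range_succ, pow_succ]
  ring

theorem antitone_mul_min_sub (hμ : 0 ≤ μ) :
    Antitone fun k => μ * ((min (n - k) m : ℕ) : ℝ) :=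
  fun i j hij => mul_le_mul_of_nonneg_left (by gcongr) hμ

theorem lossWeight_nonneg (hμ : 0 ≤ μ) : 0 ≤ lossWeight m n μ := fun k => by
  unfold lossWeight; positivity

theorem lossWeight_pos (hm : 1 ≤ m) (hμ : 0 < μ) {k : ℕ} (hk : k ≤ n) :
    0 < lossWeight m n μ k :=
  mul_pos (pow_pos hμ k) (prod_pos fun i hi => by
    have := mem_range.1 hi
    exact_mod_cast lt_min (by omega) (by omega))

theorem sum_aCoef_eq (hm : 1 ≤ m) (hμ : 0 < μ) (ht : 0 < t) :
    ∑ j ∈ range (n + 1), aCoef m j (t / μ) =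
      t * aCoef m n (t / μ) * invPowSum (lossWeight m n μ) n t := by
  rw [← sum_range_reflect, invPowSum, mul_sum]
  refine sum_congr rfl fun k hk => ?_
  have hkn : k ≤ n := Nat.lt_succ_iff.1 (mem_range.1 hk)
  have h := aCoef_sub_mul_pow hm (t / μ) hkn
  rw [Nat.add_sub_cancel, lossWeight, show -(k : ℤ) - 1 = -((k + 1 : ℕ) : ℤ) by push_cast; ring,
    zpow_neg, zpow_natCast]
  rw [div_pow] at h
  field_simp
  field_simp at h
  linear_combination t * h

theorem mul_Bmn_eq_inv_invPowSum (hm : 1 ≤ m) (hμ : 0 < μ) (ht : 0 < t) :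
    t * Bmn m n (t / μ) = (invPowSum (lossWeight m n μ) n t)⁻¹ := by
  have ha := aCoef_pos hm n (div_pos ht hμ)
  rw [Bmn, sum_aCoef_eq hm hμ ht]
  field_simp

end Queue

/-- the loss-rate function `φ` is strictly increasing and strictly convex on `[0,∞)`. -/
theorem stmt_4 (m n : ℕ) (hm : 1 ≤ m) (hn : m ≤ n) (μ : ℝ) (hμ : 0 < μ)
    (φ : ℝ → ℝ) (hφ0 : φ 0 = 0)
    (hφ : ∀ t : ℝ, 0 < t → φ t = t * Bmn m n (t / μ)) :
    StrictMonoOn φ (Set.Ici (0 : ℝ)) ∧ StrictConvexOn ℝ (Set.Ici (0 : ℝ)) φ := by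
  have hφ' : EqOn (fun t => (invPowSum (lossWeight m n μ) n t)⁻¹) φ (Ici 0) := by
    intro t ht
    rcases (mem_Ici.1 ht).eq_or_lt with rfl | ht
    · simp only [hφ0, invPowSum_zero_right, inv_zero]
    · rw [hφ t ht, mul_Bmn_eq_inv_invPowSum hm hμ ht]
  have he0 := lossWeight_nonneg (m := m) (n := n) hμ.le
  have h0 : 0 < lossWeight m n μ 0 := lossWeight_pos hm hμ (Nat.zero_le n)
  exact ⟨(strictMonoOn_inv_invPowSum he0 h0).congr hφ',
    (strictConvexOn_inv_invPowSum (lossWeight_succ m n μ) (antitone_mul_min_sub hμ.le)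
      (fun k => by positivity) he0 h0 (hm.trans hn) (lossWeight_pos hm hμ le_rfl)).congr hφ'⟩
end

section
/- Let m ≥ 1 be an integer. For every r > 0 one has m − r + r·B_m(r) > 0, so that the Erlang-C function C_m(r) = m·B_m(r) / (m − r + r·B_m(r)) is well defined and differentiable on (0,∞), and its derivative at r = m satisfies C_m'(m) = (1 − B_m(m)) / (m·B_m(m)). -/
/-- Erlang-C function `C_m(r)`. -/
noncomputable def erlangC (m : ℕ) (r : ℝ) : ℝ :=
  (m : ℝ) * erlangB m r / ((m : ℝ) - r + r * erlangB m r)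

/-!
Write `S(r) = ∑_{j ≤ m} r^j / j!`, so that `B_m(r) = (r^m/m!) / S(r)`. Since
`∑_{j ≤ m} j r^j / j! = r (S(r) - r^m/m!)`, the denominator of `C_m` satisfies
`(m - r + r B_m(r)) S(r) = ∑_{j ≤ m} (m - j) r^j / j!`, a polynomial with nonnegative coefficients
and constant term `m > 0`; this gives positivity, and differentiability follows from the quotient
rule. At `r = m` the denominator equals `m B_m(m)`, and in the quotient rule the terms containing
`B_m'(m)` cancel, leaving `(1 - B_m(m)) / (m B_m(m))`.
-/

open Finset Nat

noncomputable def expPartialSum (m : ℕ) (r : ℝ) : ℝ :=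
  ∑ j ∈ range (m + 1), r ^ j / (j ! : ℝ)

lemma erlangB_eq_div (m : ℕ) (r : ℝ) : erlangB m r = r ^ m / (m ! : ℝ) / expPartialSum m r := rfl

lemma expPartialSum_pos (m : ℕ) {r : ℝ} (hr : 0 ≤ r) : 0 < expPartialSum m r :=
  sum_pos' (fun j _ => by positivity) ⟨0, by simp⟩

lemma sum_range_succ_mul_pow_div_factorial (m : ℕ) (r : ℝ) :
    ∑ j ∈ range (m + 1), (j : ℝ) * r ^ j / (j ! : ℝ) = r * ∑ j ∈ range m, r ^ j / (j ! : ℝ) := by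
  rw [sum_range_succ', mul_sum]
  simp only [CharP.cast_eq_zero, zero_mul, zero_div, add_zero]
  refine sum_congr rfl fun j _ => ?_
  rw [Nat.factorial_succ, pow_succ]
  push_cast
  field_simp

lemma sub_mul_expPartialSum_add (m : ℕ) (r : ℝ) :
    ((m : ℝ) - r) * expPartialSum m r + r * (r ^ m / (m ! : ℝ)) =
      ∑ j ∈ range (m + 1), ((m : ℝ) - j) * r ^ j / (j ! : ℝ) := by
  have hsplit : expPartialSum m r = ∑ j ∈ range m, r ^ j / (j ! : ℝ) + r ^ m / (m ! : ℝ) :=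
    sum_range_succ _ _
  have hrhs : ∑ j ∈ range (m + 1), ((m : ℝ) - j) * r ^ j / (j ! : ℝ) =
      m * expPartialSum m r - ∑ j ∈ range (m + 1), (j : ℝ) * r ^ j / (j ! : ℝ) := by
    rw [expPartialSum, mul_sum, ← sum_sub_distrib]
    exact sum_congr rfl fun j _ => by ring
  rw [hrhs, sum_range_succ_mul_pow_div_factorial, hsplit]
  ring

lemma erlangC_denom_mul_expPartialSum (m : ℕ) {r : ℝ} (hr : 0 ≤ r) :
    ((m : ℝ) - r + r * erlangB m r) * expPartialSum m r =
      ∑ j ∈ range (m + 1), ((m : ℝ) - j) * r ^ j / (j ! : ℝ) := by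
  rw [← sub_mul_expPartialSum_add, erlangB_eq_div]
  field_simp [(expPartialSum_pos m hr).ne']

lemma erlangC_denom_pos {m : ℕ} (hm : 0 < m) {r : ℝ} (hr : 0 ≤ r) :
    0 < (m : ℝ) - r + r * erlangB m r := by
  have hsum : 0 < ∑ j ∈ range (m + 1), ((m : ℝ) - j) * r ^ j / (j ! : ℝ) := by
    refine sum_pos' (fun j hj => ?_) ⟨0, by simp, by simpa using hm⟩
    have : (j : ℝ) ≤ m := by exact_mod_cast Nat.lt_succ_iff.mp (mem_range.mp hj)
    have : 0 ≤ (m : ℝ) - j := by linarith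
    positivity
  rw [← erlangC_denom_mul_expPartialSum m hr] at hsum
  exact pos_of_mul_pos_left hsum (expPartialSum_pos m hr).le

lemma erlangB_pos (m : ℕ) {r : ℝ} (hr : 0 < r) : 0 < erlangB m r := by
  rw [erlangB_eq_div]
  have := expPartialSum_pos m hr.le
  positivity

lemma differentiableAt_erlangB (m : ℕ) {r : ℝ} (hr : 0 ≤ r) : DifferentiableAt ℝ (erlangB m) r := by
  have : DifferentiableAt ℝ (expPartialSum m) r := by unfold expPartialSum; fun_prop
  exact ((differentiableAt_pow m).div_const _).div this (expPartialSum_pos m hr).ne'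

lemma differentiableAt_erlangC {m : ℕ} (hm : 0 < m) {r : ℝ} (hr : 0 ≤ r) :
    DifferentiableAt ℝ (erlangC m) r := by
  have hB := differentiableAt_erlangB m hr
  exact (hB.const_mul _).div (by fun_prop) (erlangC_denom_pos hm hr).ne'

lemma deriv_erlangC_natCast_self {m : ℕ} (hm : 0 < m) :
    deriv (erlangC m) m = (1 - erlangB m m) / (m * erlangB m m) := by
  have hm' : (0 : ℝ) < m := Nat.cast_pos.mpr hm
  have hB : HasDerivAt (erlangB m) (deriv (erlangB m) m) m :=
    (differentiableAt_erlangB m hm'.le).hasDerivAt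
  have hdenom := ((hasDerivAt_id' (m : ℝ)).const_sub (m : ℝ)).fun_add
    ((hasDerivAt_id' (m : ℝ)).fun_mul hB)
  have hC : HasDerivAt (erlangC m) _ m :=
    (hB.const_mul (m : ℝ)).div hdenom (erlangC_denom_pos hm hm'.le).ne'
  have := (erlangB_pos m hm').ne'
  rw [hC.deriv, sub_self, zero_add]
  field_simp
  ring

/-- well-definedness and derivative at `r = m` of the Erlang-C function. -/
theorem stmt_17 (m : ℕ) (hm : 1 ≤ m) :
    (∀ r : ℝ, 0 < r → 0 < (m : ℝ) - r + r * erlangB m r) ∧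
    (∀ r : ℝ, 0 < r → DifferentiableAt ℝ (erlangC m) r) ∧
    deriv (erlangC m) (m : ℝ) = (1 - erlangB m (m : ℝ)) / ((m : ℝ) * erlangB m (m : ℝ)) := by
  exact ⟨fun r hr => erlangC_denom_pos hm hr.le, fun r hr => differentiableAt_erlangC hm hr.le,
    deriv_erlangC_natCast_self hm⟩
end
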